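/- arXiv:1601.06917 — 2 statements merged into one kernel-verified Lean document; each statement's English description precedes it below -/
import Mathlib

section
/- The λ-brackets [L_λ L] = (∂+2λ)L + (λ³/12)C₁, [L_λ M] = (∂+λ)M + λ²C₂, [M_λ L] = λM − λ²C₂, [M_λ M] = λC₃ (with C₁,C₂,C₃ central, ∂Cᵢ=0) satisfy the conformal Jacobi identity [a_λ[b_μ c]] = [[a_λ b]_{λ+μ}c] + [b_μ[a_λ c]] for all triples of generators a,b,c ∈ {L,M}. -/
/-! Sesquilinearity turns a coefficient `p(∂)` of the inner bracket into `p(∂ + λ)`, which is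
`p(λ)` on the central components since `∂ Cᵢ = 0`. So the Jacobi identity splits componentwise: on
`L`, `M` it is the Jacobi identity of the centerless Heisenberg-Virasoro conformal algebra, and on
`C₁`, `C₂`, `C₃` it says that the central terms form a 2-cocycle of it. Each is a polynomial
identity in `∂`, `λ`, `μ`. -/

open MvPolynomial

namespace Stmt16

/-- Polynomials in `∂` (`X 0`), `λ` (`X 1`) and `μ` (`X 2`). -/
abbrev P := MvPolynomial (Fin 3) ℂ

/-- Elements of the central extension are recorded by their coefficients on the
basis `(L, M, C₁, C₂, C₃)`. -/
abbrev Coeffs := Fin 5 → P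

/-- λ-brackets of the generators `L` (index 0) and `M` (index 1), with `d`
standing for `∂` and `l` for the bracket parameter:
`[L_λ L] = (∂+2λ)L + (λ³/12)C₁`, `[L_λ M] = (∂+λ)M + λ²C₂`,
`[M_λ L] = λM − λ²C₂`, `[M_λ M] = λC₃`. -/
noncomputable def brk (a b : Fin 2) (d l : P) : Coeffs :=
  match a, b with
  | 0, 0 => ![d + 2 * l, 0, C (1 / 12 : ℂ) * l ^ 3, 0, 0]
  | 0, 1 => ![0, d + l, 0, l ^ 2, 0]
  | 1, 0 => ![0, l, 0, -(l ^ 2), 0]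
  | 1, 1 => ![0, 0, 0, 0, l]

/-- Substitute `p` for `∂` (that is, for `X 0`). -/
noncomputable def subD (p : P) : P →ₐ[ℂ] P := aeval ![p, X 1, X 2]

/-- Action `a_l e` of the generator `a` with parameter `l` on an element
`e = e₀(∂)L + e₁(∂)M + (central part)`: by sesquilinearity
`a_λ(p(∂)b) = p(∂+λ)[a_λ b]`, where `∂` acts as `0` on the central components,
and the central elements are annihilated by the action. -/
noncomputable def act (a : Fin 2) (l : P) (e : Coeffs) : Coeffs := fun i =>
    (if (i : ℕ) < 2 then subD (X 0 + l) else subD l) (e 0) * brk a 0 (X 0) l i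
  + (if (i : ℕ) < 2 then subD (X 0 + l) else subD l) (e 1) * brk a 1 (X 0) l i

/-- Bracket `[e_ν c]` of an element `e = e₀(∂)L + e₁(∂)M + (central part)` with the
generator `c` at parameter `nu`, using `[(p(∂)a)_ν c] = p(−ν)[a_ν c]` and the
centrality of the `Cᵢ`. -/
noncomputable def actR (e : Coeffs) (nu : P) (c : Fin 2) : Coeffs := fun i =>
  subD (-nu) (e 0) * brk 0 c (X 0) nu i + subD (-nu) (e 1) * brk 1 c (X 0) nu i

@[simp] lemma subD_X_zero (p : P) : subD p (X 0) = p := by simp [subD]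
@[simp] lemma subD_X_one (p : P) : subD p (X 1) = X 1 := by simp [subD]
@[simp] lemma subD_X_two (p : P) : subD p (X 2) = X 2 := by simp [subD]

lemma act_apply_of_lt {i : Fin 5} (hi : (i : ℕ) < 2) (a : Fin 2) (l : P) (e : Coeffs) :
    act a l e i =
      subD (X 0 + l) (e 0) * brk a 0 (X 0) l i + subD (X 0 + l) (e 1) * brk a 1 (X 0) l i := by
  simp [act, hi]

lemma act_apply_of_le {i : Fin 5} (hi : 2 ≤ (i : ℕ)) (a : Fin 2) (l : P) (e : Coeffs) :
    act a l e i = subD l (e 0) * brk a 0 (X 0) l i + subD l (e 1) * brk a 1 (X 0) l i := by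
  simp [act, hi.not_gt]

lemma jacobi_apply_noncentral (a b c : Fin 2) {i : Fin 5} (hi : (i : ℕ) < 2) :
    act a (X 1) (brk b c (X 0) (X 2)) i =
      actR (brk a b (X 0) (X 1)) (X 1 + X 2) c i + act b (X 2) (brk a c (X 0) (X 1)) i := by
  simp only [act_apply_of_lt hi, actR]
  obtain rfl | rfl : i = 0 ∨ i = 1 := by omega
  all_goals fin_cases a <;> fin_cases b <;> fin_cases c <;>
    simp only [brk, Matrix.cons_val, map_add, map_mul, map_ofNat, map_zero,
      subD_X_zero, subD_X_one, subD_X_two] <;> ring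

lemma jacobi_apply_central (a b c : Fin 2) {i : Fin 5} (hi : 2 ≤ (i : ℕ)) :
    act a (X 1) (brk b c (X 0) (X 2)) i =
      actR (brk a b (X 0) (X 1)) (X 1 + X 2) c i + act b (X 2) (brk a c (X 0) (X 1)) i := by
  simp only [act_apply_of_le hi, actR]
  obtain rfl | rfl | rfl : i = 2 ∨ i = 3 ∨ i = 4 := by omega
  all_goals fin_cases a <;> fin_cases b <;> fin_cases c <;>
    simp only [brk, Matrix.cons_val, map_add, map_mul, map_ofNat, map_zero,
      subD_X_zero, subD_X_one, subD_X_two] <;> ring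

/-- The conformal Jacobi identity
`[a_λ[b_μ c]] = [[a_λ b]_{λ+μ} c] + [b_μ[a_λ c]]`
holds for all triples of generators of the universal central extension of the
Heisenberg-Virasoro conformal algebra. -/
theorem stmt_16 : ∀ a b c : Fin 2,
    act a (X 1) (brk b c (X 0) (X 2)) =
      actR (brk a b (X 0) (X 1)) (X 1 + X 2) c + act b (X 2) (brk a c (X 0) (X 1)) := by
  intro a b c
  funext i
  rcases lt_or_ge (i : ℕ) 2 with hi | hi
  · exact jacobi_apply_noncentral a b c hi
  · exact jacobi_apply_central a b c hi

end Stmt16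
end

section
/- Let p(λ₁,...,λ_q) be a polynomial that is homogeneous of total degree d. Then Σᵢ λᵢ ∂p/∂λᵢ = d·p (Euler's identity), and consequently if a q-cochain γ of the Heisenberg-Virasoro conformal algebra with k of its arguments equal to L satisfies (dτ + τd)γ = (d − k)γ where d = deg γ, then any cocycle of degree d ≠ k is a coboundary (indeed γ = d(τγ)/(d−k)). -/
open MvPolynomial

theorem LinearMap.eq_apply_inv_smul_of_homotopy {K C₀ C₁ C₂ : Type*} [DivisionRing K]
    [AddCommGroup C₀] [AddCommGroup C₁] [AddCommGroup C₂]
    [Module K C₀] [Module K C₁] [Module K C₂]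
    (d₀ : C₀ →ₗ[K] C₁) (d₁ : C₁ →ₗ[K] C₂) (τ₁ : C₁ →ₗ[K] C₀) (τ₂ : C₂ →ₗ[K] C₁)
    {c : K} (hc : c ≠ 0) {γ : C₁} (hcocycle : d₁ γ = 0)
    (hhomotopy : d₀ (τ₁ γ) + τ₂ (d₁ γ) = c • γ) :
    γ = d₀ (c⁻¹ • τ₁ γ) := by
  rw [hcocycle, map_zero, add_zero] at hhomotopy
  rw [map_smul, hhomotopy, inv_smul_smul₀ hc]

/-- Euler's identity `Σᵢ λᵢ ∂p/∂λᵢ = d·p` for a homogeneous polynomial of total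
degree `d`; and consequently, for cochain spaces `C^{q−1}, C^q, C^{q+1}` with
differentials `dqm : C^{q−1} → C^q`, `dq : C^q → C^{q+1}` and operators
`τq : C^q → C^{q−1}`, `τq1 : C^{q+1} → C^q` satisfying the homotopy identity
`(dτ + τd)γ = (d − k)·γ`, any cocycle `γ` of degree `d ≠ k` is a coboundary,
indeed `γ = dqm((d−k)⁻¹ τq γ)`. -/
theorem stmt_19 :
    (∀ (q dd : ℕ) (p : MvPolynomial (Fin q) ℂ), p.IsHomogeneous dd →
      ∑ i, X i * pderiv i p = (dd : MvPolynomial (Fin q) ℂ) * p) ∧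
    (∀ (Cqm Cq Cq1 : Type) [AddCommGroup Cqm] [AddCommGroup Cq] [AddCommGroup Cq1]
      [Module ℂ Cqm] [Module ℂ Cq] [Module ℂ Cq1]
      (dqm : Cqm →ₗ[ℂ] Cq) (dq : Cq →ₗ[ℂ] Cq1) (τq : Cq →ₗ[ℂ] Cqm)
      (τq1 : Cq1 →ₗ[ℂ] Cq) (d k : ℂ) (γ : Cq),
      dqm (τq γ) + τq1 (dq γ) = (d - k) • γ → d ≠ k → dq γ = 0 →
        γ = dqm ((d - k)⁻¹ • τq γ)) := by
  refine ⟨fun q dd p hp => ?_, fun _ _ _ _ _ _ _ _ _ dqm dq τq τq1 d k γ hhom hdk hco => ?_⟩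
  · rw [hp.sum_X_mul_pderiv, nsmul_eq_mul]
  · exact dqm.eq_apply_inv_smul_of_homotopy dq τq τq1 (sub_ne_zero_of_ne hdk) hco hhom
end
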